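/- Let k be an integer with k ≥ 2 and let ℓ ∈ ℝ with ℓ < 0. Define h : ℍ → ℂ on the upper half-plane ℍ = {τ ∈ ℂ : Im τ > 0} by h(τ) = Γ(k−1, −4πℓ·Im τ) · exp(2πiℓτ), where Γ(s, x) = ∫_x^∞ t^(s−1) e^(−t) dt is the upper incomplete gamma function (note −4πℓ·Im τ > 0 on ℍ). Let D g = (1/(2πi))·∂g/∂τ with ∂/∂τ = (1/2)(∂/∂u − i·∂/∂v) the Wirtinger derivative, τ = u + iv. Then D^(k−1) h = 0 on ℍ, where D^(k−1) is the (k−1)-fold iterate of D. -/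

import Mathlib

open Complex

/-- The upper incomplete gamma function `Γ(s, x) = ∫_x^∞ t^(s−1) e^(−t) dt`. -/
noncomputable def upperIncompleteGamma (s x : ℝ) : ℝ :=
  ∫ t in Set.Ioi x, t ^ (s - 1) * Real.exp (-t)

/-- The Wirtinger derivative `∂g/∂τ = (1/2)(∂g/∂u − i·∂g/∂v)`. -/
noncomputable def wirtingerDeriv (g : ℂ → ℂ) (τ : ℂ) : ℂ :=
  (1 / 2) * (fderiv ℝ g τ 1 - Complex.I * fderiv ℝ g τ Complex.I)

/-- The operator `D g = (1/(2πi))·∂g/∂τ`. -/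
noncomputable def DOp (g : ℂ → ℂ) : ℂ → ℂ :=
  fun τ => (1 / (2 * (Real.pi : ℂ) * Complex.I)) * wirtingerDeriv g τ

/-! ### Auxiliary machinery -/

section Aux

open Finset MeasureTheory Filter

/-- Closed form for the incomplete gamma function at natural parameter. -/
lemma uig_closed (p : ℕ) (x : ℝ) (hx : 0 < x) :
    upperIncompleteGamma ((p : ℝ) + 1) x
      = Real.exp (-x) * ∑ j ∈ Finset.range (p + 1),
          ((p.factorial : ℝ) / j.factorial) * x ^ j := by
  set F : ℝ → ℝ := fun t =>
    -(Real.exp (-t) * ∑ j ∈ Finset.range (p + 1), ((p.factorial : ℝ) / j.factorial) * t ^ j)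
    with hF
  have hderiv : ∀ t : ℝ, HasDerivAt F (t ^ p * Real.exp (-t)) t := by
    intro t
    have h1 : HasDerivAt (fun t : ℝ => Real.exp (-t)) (-Real.exp (-t)) t := by
      exact ((hasDerivAt_id t).neg.exp).congr_deriv (by simp)
    have h2 : HasDerivAt
        (fun t : ℝ => ∑ j ∈ Finset.range (p + 1), ((p.factorial : ℝ) / j.factorial) * t ^ j)
        (∑ j ∈ Finset.range (p + 1), ((p.factorial : ℝ) / j.factorial) * (j * t ^ (j - 1))) t :=
      HasDerivAt.fun_sum fun j _ => (hasDerivAt_pow j t).const_mul _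
    have h3 := (h1.mul h2).neg
    have hsum : (∑ j ∈ Finset.range (p + 1), ((p.factorial : ℝ) / j.factorial) * (j * t ^ (j - 1)))
        = ∑ j ∈ Finset.range p, ((p.factorial : ℝ) / j.factorial) * t ^ j := by
      rw [Finset.sum_range_succ']
      simp only [Nat.cast_zero, zero_mul, mul_zero, add_zero, Nat.cast_ofNat]
      refine Finset.sum_congr rfl fun i _ => ?_
      have hfac : ((i + 1).factorial : ℝ) = (i + 1) * i.factorial := by
        rw [Nat.factorial_succ]; push_cast; ring
      have h0 : (i.factorial : ℝ) ≠ 0 := Nat.cast_ne_zero.2 i.factorial_ne_zero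
      have h1' : ((i : ℝ) + 1) ≠ 0 := by positivity
      rw [hfac]
      simp only [Nat.add_sub_cancel, Nat.cast_add, Nat.cast_one]
      field_simp
    have hval : -(-Real.exp (-t) *
          (∑ j ∈ Finset.range (p + 1), ((p.factorial : ℝ) / j.factorial) * t ^ j)
        + Real.exp (-t) *
          (∑ j ∈ Finset.range (p + 1), ((p.factorial : ℝ) / j.factorial) * (j * t ^ (j - 1))))
        = t ^ p * Real.exp (-t) := by
      rw [hsum, Finset.sum_range_succ]
      have : (p.factorial : ℝ) / p.factorial = 1 := by
        field_simp
      rw [this]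
      ring
    rw [← hval]
    exact h3
  have hcont : ContinuousWithinAt F (Set.Ici x) x :=
    (hderiv x).continuousAt.continuousWithinAt
  have htend : Tendsto F atTop (nhds 0) := by
    have hFeq : F = fun t => ∑ j ∈ Finset.range (p + 1),
        -((p.factorial : ℝ) / j.factorial) * (t ^ j * Real.exp (-t)) := by
      funext t
      simp only [hF]
      rw [Finset.mul_sum, ← Finset.sum_neg_distrib]
      exact Finset.sum_congr rfl fun j _ => by ring
    rw [hFeq]
    have : Tendsto (fun t : ℝ => ∑ j ∈ Finset.range (p + 1),
        -((p.factorial : ℝ) / j.factorial) * (t ^ j * Real.exp (-t))) atTop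
        (nhds (∑ j ∈ Finset.range (p + 1), -((p.factorial : ℝ) / j.factorial) * 0)) :=
      tendsto_finset_sum _ fun j _ =>
        (Real.tendsto_pow_mul_exp_neg_atTop_nhds_zero j).const_mul _
    simpa using this
  have hint : IntegrableOn (fun t : ℝ => t ^ p * Real.exp (-t)) (Set.Ioi x) := by
    have h0 : IntegrableOn (fun t : ℝ => Real.exp (-t) * t ^ ((p : ℝ) + 1 - 1)) (Set.Ioi 0) :=
      Real.GammaIntegral_convergent (by positivity)
    have h1 : IntegrableOn (fun t : ℝ => Real.exp (-t) * t ^ ((p : ℝ) + 1 - 1)) (Set.Ioi x) :=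
      h0.mono_set (Set.Ioi_subset_Ioi hx.le)
    have : (fun t : ℝ => Real.exp (-t) * t ^ ((p : ℝ) + 1 - 1))
        = fun t : ℝ => t ^ p * Real.exp (-t) := by
      funext t
      rw [add_sub_cancel_right, Real.rpow_natCast, mul_comm]
    rwa [this] at h1
  have key := integral_Ioi_of_hasDerivAt_of_tendsto hcont (fun t _ => hderiv t) hint htend
  have hig : upperIncompleteGamma ((p : ℝ) + 1) x
      = ∫ t in Set.Ioi x, t ^ p * Real.exp (-t) := by
    rw [upperIncompleteGamma]
    congr 1
    funext t
    rw [add_sub_cancel_right, Real.rpow_natCast]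
  rw [hig, key, hF]
  ring

/-- The basic antiholomorphic building block `v^m · exp(a·conj τ)`. -/
noncomputable def gFun (a : ℂ) (m : ℕ) : ℂ → ℂ :=
  fun τ => ((τ.im : ℂ)) ^ m * Complex.exp (a * (starRingEnd ℂ) τ)

/-- `L w = (w.im : ℂ)` as a real-linear map. -/
noncomputable def LIm : ℂ →L[ℝ] ℂ := Complex.ofRealCLM.comp Complex.imCLM

/-- `M w = a * conj w` as a real-linear map. -/
noncomputable def MConj (a : ℂ) : ℂ →L[ℝ] ℂ :=
  a • (Complex.conjCLE : ℂ ≃L[ℝ] ℂ).toContinuousLinearMap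

/-- Real Fréchet derivative of `gFun a m`. -/
noncomputable def gDeriv (a : ℂ) (m : ℕ) (τ : ℂ) : ℂ →L[ℝ] ℂ :=
  ((τ.im : ℂ) ^ m) • (Complex.exp (a * (starRingEnd ℂ) τ) • MConj a)
    + Complex.exp (a * (starRingEnd ℂ) τ) • (((m : ℂ) * (τ.im : ℂ) ^ (m - 1)) • LIm)

lemma hasFDerivAt_pow_comp {f : ℂ → ℂ} {f' : ℂ →L[ℝ] ℂ} {x : ℂ}
    (hf : HasFDerivAt f f' x) (m : ℕ) :
    HasFDerivAt (fun y => f y ^ m) (((m : ℂ) * f x ^ (m - 1)) • f') x := by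
  induction m with
  | zero =>
    have h0 : (((0 : ℕ) : ℂ) * f x ^ (0 - 1)) • f' = (0 : ℂ →L[ℝ] ℂ) := by
      match_scalars
      push_cast
      ring
    simp only [pow_zero, h0]
    exact hasFDerivAt_const (1 : ℂ) x
  | succ m ih =>
    have h : HasFDerivAt (fun y => f y * f y ^ m) _ x := hf.mul ih
    have heq : (fun y => f y * f y ^ m) = fun y => f y ^ (m + 1) := by
      funext y; ring
    rw [heq] at h
    cases m with
    | zero => simpa [smul_smul] using h
    | succ m' =>
      have key : f x • (((m' + 1 : ℕ) : ℂ) * f x ^ (m' + 1 - 1)) • f'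
            + f x ^ (m' + 1) • f'
          = (((m' + 1 + 1 : ℕ) : ℂ) * f x ^ (m' + 1 + 1 - 1)) • f' := by
        simp only [Nat.add_sub_cancel]
        match_scalars
        push_cast
        ring
      rwa [key] at h

lemma hasFDerivAt_gFun (a : ℂ) (m : ℕ) (τ : ℂ) :
    HasFDerivAt (gFun a m) (gDeriv a m τ) τ := by
  have hL : HasFDerivAt (fun τ : ℂ => ((τ.im : ℝ) : ℂ)) LIm τ := LIm.hasFDerivAt
  have hP : HasFDerivAt (fun τ : ℂ => ((τ.im : ℝ) : ℂ) ^ m)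
      (((m : ℂ) * (τ.im : ℂ) ^ (m - 1)) • LIm) τ := hasFDerivAt_pow_comp hL m
  have hM : HasFDerivAt (fun τ : ℂ => a * (starRingEnd ℂ) τ) (MConj a) τ :=
    (MConj a).hasFDerivAt
  have hE : HasFDerivAt (fun τ : ℂ => Complex.exp (a * (starRingEnd ℂ) τ))
      (Complex.exp (a * (starRingEnd ℂ) τ) • MConj a) τ :=
    (Complex.hasDerivAt_exp (a * (starRingEnd ℂ) τ)).comp_hasFDerivAt τ hM
  exact hP.mul hE

lemma gDeriv_apply (a : ℂ) (m : ℕ) (τ w : ℂ) :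
    gDeriv a m τ w = (τ.im : ℂ) ^ m * (Complex.exp (a * (starRingEnd ℂ) τ)
        * (a * (starRingEnd ℂ) w))
      + Complex.exp (a * (starRingEnd ℂ) τ) * ((m : ℂ) * (τ.im : ℂ) ^ (m - 1) * (w.im : ℂ)) := by
  simp [gDeriv, MConj, LIm, smul_eq_mul, mul_assoc]

lemma wirt_of_hasFDerivAt {f : ℂ → ℂ} {D : ℂ →L[ℝ] ℂ} {τ : ℂ} (hf : HasFDerivAt f D τ) :
    wirtingerDeriv f τ = (1 / 2) * (D 1 - Complex.I * D Complex.I) := by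
  rw [wirtingerDeriv, hf.fderiv]

/-- Polynomial-in-`v` times antiholomorphic exponential. -/
noncomputable def TFun (a : ℂ) (c : ℕ → ℂ) (n : ℕ) : ℂ → ℂ :=
  fun τ => ∑ j ∈ Finset.range n, c j * gFun a j τ

lemma hasFDerivAt_TFun (a : ℂ) (c : ℕ → ℂ) (n : ℕ) (τ : ℂ) :
    HasFDerivAt (TFun a c n) (∑ j ∈ Finset.range n, c j • gDeriv a j τ) τ :=
  HasFDerivAt.fun_sum fun j _ => (hasFDerivAt_gFun a j τ).const_mul (c j)

lemma DOp_TFun_apply (a : ℂ) (c : ℕ → ℂ) (n : ℕ) (τ : ℂ) :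
    DOp (TFun a c n) τ = ∑ j ∈ Finset.range n,
      c j * (-(j : ℂ) / (4 * Real.pi) * ((τ.im : ℂ) ^ (j - 1)
        * Complex.exp (a * (starRingEnd ℂ) τ))) := by
  have hπ : (Real.pi : ℂ) ≠ 0 := by
    exact_mod_cast Real.pi_ne_zero
  have hinv : (1 : ℂ) / (2 * Real.pi * Complex.I) = -Complex.I / (2 * Real.pi) := by
    rw [div_eq_div_iff (by simp [hπ, Complex.I_ne_zero]) (by simp [hπ])]
    linear_combination (2 * (Real.pi : ℂ)) * Complex.I_sq
  rw [DOp, wirt_of_hasFDerivAt (hasFDerivAt_TFun a c n τ)]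
  simp only [ContinuousLinearMap.sum_apply, ContinuousLinearMap.smul_apply, smul_eq_mul,
    gDeriv_apply, map_one, Complex.one_im, Complex.conj_I, Complex.I_im,
    Complex.ofReal_zero, Complex.ofReal_one, mul_zero, mul_one, add_zero]
  rw [Finset.mul_sum, ← Finset.sum_sub_distrib, Finset.mul_sum, Finset.mul_sum, hinv]
  refine Finset.sum_congr rfl fun j _ => ?_
  linear_combination (-Complex.I * c j * a * ((τ.im : ℂ) ^ j
      * Complex.exp (a * (starRingEnd ℂ) τ)) / (4 * (Real.pi : ℂ))
    + c j * (j : ℂ) * (τ.im : ℂ) ^ (j - 1)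
      * Complex.exp (a * (starRingEnd ℂ) τ) / (4 * (Real.pi : ℂ))) * Complex.I_sq

lemma DOp_TFun (a : ℂ) (c : ℕ → ℂ) (n : ℕ) :
    DOp (TFun a c (n + 1))
      = TFun a (fun j => -((j : ℂ) + 1) / (4 * Real.pi) * c (j + 1)) n := by
  funext τ
  rw [DOp_TFun_apply, TFun]
  rw [Finset.sum_range_succ']
  simp only [Nat.cast_zero, neg_zero, zero_div, zero_mul, mul_zero, add_zero]
  refine Finset.sum_congr rfl fun j _ => ?_
  simp only [Nat.add_sub_cancel, Nat.cast_add, Nat.cast_one, gFun]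
  ring

lemma DOp_iter_TFun (a : ℂ) : ∀ (n : ℕ) (c : ℕ → ℂ), DOp^[n] (TFun a c n) = fun _ => 0 := by
  intro n
  induction n with
  | zero =>
    intro c
    funext τ
    simp [TFun]
  | succ n ih =>
    intro c
    rw [Function.iterate_succ_apply, DOp_TFun]
    exact ih _

lemma DOp_iter_congr {U : Set ℂ} (hU : IsOpen U) :
    ∀ (m : ℕ) (f g : ℂ → ℂ), Set.EqOn f g U → ∀ τ ∈ U, DOp^[m] f τ = DOp^[m] g τ := by
  intro m
  induction m with
  | zero => intro f g hfg τ hτ; exact hfg hτ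
  | succ m ih =>
    intro f g hfg τ hτ
    rw [Function.iterate_succ_apply, Function.iterate_succ_apply]
    refine ih _ _ (fun σ hσ => ?_) τ hτ
    have hev : f =ᶠ[nhds σ] g := Filter.eventuallyEq_of_mem (hU.mem_nhds hσ) hfg
    simp only [DOp, wirtingerDeriv, hev.fderiv_eq]

end Aux

/-- For an integer `k ≥ 2` and `ℓ < 0`, the function
`h(τ) = Γ(k−1, −4πℓ·Im τ) · exp(2πiℓτ)` on the upper half-plane is annihilated by the
`(k−1)`-fold iterate of `D = (1/(2πi)) ∂/∂τ`. -/
theorem bol_annihilates_nonholomorphic_part (k : ℕ) (hk : 2 ≤ k) (ℓ : ℝ) (hℓ : ℓ < 0)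
    (h : ℂ → ℂ)
    (hh : ∀ τ : ℂ, h τ =
      ((upperIncompleteGamma ((k : ℝ) - 1) (-4 * Real.pi * ℓ * τ.im) : ℝ) : ℂ) *
        Complex.exp (2 * Real.pi * Complex.I * ℓ * τ))
    (τ : ℂ) (hτ : 0 < τ.im) :
    (DOp^[k - 1] h) τ = 0 := by
  obtain ⟨p, rfl⟩ : ∃ p, k = p + 2 := ⟨k - 2, by omega⟩
  set a : ℂ := 2 * (Real.pi : ℂ) * Complex.I * (ℓ : ℂ) with ha
  set c : ℕ → ℂ := fun j =>
    ((p.factorial : ℂ) / (j.factorial : ℂ)) * (((-4) * Real.pi * ℓ : ℝ) : ℂ) ^ j with hc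
  have hU : IsOpen {z : ℂ | 0 < z.im} := isOpen_lt continuous_const Complex.continuous_im
  have heq : Set.EqOn h (TFun a c (p + 1)) {z : ℂ | 0 < z.im} := by
    intro σ hσ
    have hσ' : 0 < σ.im := hσ
    have hx : 0 < -4 * Real.pi * ℓ * σ.im := by
      nlinarith [mul_pos (mul_pos Real.pi_pos (neg_pos.mpr hℓ)) hσ']
    have hs : ((p + 2 : ℕ) : ℝ) - 1 = (p : ℝ) + 1 := by push_cast; ring
    rw [hh σ, hs, uig_closed p _ hx]
    have hconj : (starRingEnd ℂ) σ = σ - 2 * (σ.im : ℂ) * Complex.I := by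
      have hsc := Complex.sub_conj σ
      push_cast at hsc
      linear_combination -hsc
    have hE : ((Real.exp (-(-4 * Real.pi * ℓ * σ.im)) : ℝ) : ℂ)
        * Complex.exp (a * σ)
        = Complex.exp (a * (starRingEnd ℂ) σ) := by
      rw [Complex.ofReal_exp, ← Complex.exp_add]
      congr 1
      rw [hconj, ha]
      push_cast
      linear_combination ((4 : ℂ) * Real.pi * ℓ * σ.im) * Complex.I_sq
    rw [TFun]
    push_cast at hE ⊢
    rw [Finset.mul_sum, Finset.sum_mul]
    refine Finset.sum_congr rfl fun j _ => ?_
    simp only [hc, gFun]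
    push_cast
    linear_combination ((p.factorial : ℂ) / (j.factorial : ℂ)
      * ((-4) * (Real.pi : ℂ) * (ℓ : ℂ) * (σ.im : ℂ)) ^ j) * hE
  have hred : p + 2 - 1 = p + 1 := rfl
  rw [hred]
  rw [DOp_iter_congr hU (p + 1) h (TFun a c (p + 1)) heq τ hτ, DOp_iter_TFun a (p + 1) c]
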